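/- The set G := { s : End_R(V) | δ(s) is invertible } carries a group structure with multiplication ∗, identity element 0, and inverse map s ↦ −s ∘ δ(s)⁻¹; moreover δ : G → (End_R(V))ˣ, s ↦ δ(s), is a group homomorphism into the group of invertible endomorphisms. -/

import Mathlib

/- Let `R` be a commutative ring, `V` an `R`-module and `D = ∂ : V → V` an `R`-linear map
with `∂ ∘ ∂ = 0`.  In `Module.End R V`, multiplication is composition, so `s * t = s ∘ t`. -/

variable {R : Type*} [CommRing R] {V : Type*} [AddCommGroup V] [Module R V]

/-- `s ∗ t := s + t + s∘∂∘t + s∘t∘∂`. -/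
def mulStar (D s t : Module.End R V) : Module.End R V :=
  s + t + s * D * t + s * t * D

/-- `δ(s) := ∂∘s + s∘∂ + id`. -/
def dlt (D s : Module.End R V) : Module.End R V :=
  D * s + s * D + 1

/-! The identity `s ∗ t = s ∘ δ(t) + t`, together with the fact that `δ(t)` commutes with `∂`
when `∂ ∘ ∂ = 0`, gives `δ(s ∗ t) = δ(s) ∘ δ(t)`; associativity of `∗` and the left inverse
law `(-s ∘ δ(s)⁻¹) ∗ s = 0` follow formally from these two identities. -/

lemma mulStar_eq_mul_dlt_add (D s t : Module.End R V) : mulStar D s t = s * dlt D t + t := by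
  simp only [mulStar, dlt]; noncomm_ring

lemma dlt_mul_add (D s u t : Module.End R V) :
    dlt D (s * u + t) = D * s * u + s * (u * D) + dlt D t := by
  simp only [dlt]; noncomm_ring

lemma dlt_zero (D : Module.End R V) : dlt D 0 = 1 := by simp [dlt]

lemma mulStar_zero (D s : Module.End R V) : mulStar D s 0 = s := by simp [mulStar]

lemma zero_mulStar (D s : Module.End R V) : mulStar D 0 s = s := by simp [mulStar]

lemma commute_dlt {D : Module.End R V} (hD : D * D = 0) (t : Module.End R V) :
    Commute D (dlt D t) := by
  have hl : D * dlt D t = D * D * t + D * t * D + D := by simp only [dlt]; noncomm_ring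
  have hr : dlt D t * D = D * t * D + t * (D * D) + D := by simp only [dlt]; noncomm_ring
  rw [Commute, SemiconjBy, hl, hr, hD, zero_mul, mul_zero, zero_add, add_zero]

lemma dlt_mulStar {D : Module.End R V} (hD : D * D = 0) (s t : Module.End R V) :
    dlt D (mulStar D s t) = dlt D s * dlt D t := by
  rw [mulStar_eq_mul_dlt_add, dlt_mul_add, ← (commute_dlt hD t).eq]
  simp only [dlt]; noncomm_ring

lemma mulStar_assoc {D : Module.End R V} (hD : D * D = 0) (s t u : Module.End R V) :
    mulStar D (mulStar D s t) u = mulStar D s (mulStar D t u) := by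
  rw [mulStar_eq_mul_dlt_add D s (mulStar D t u), dlt_mulStar hD]
  simp only [mulStar_eq_mul_dlt_add]; noncomm_ring

noncomputable def starInv (D s : Module.End R V) : Module.End R V :=
  -(s * Ring.inverse (dlt D s))

lemma starInv_mulStar_self {D s : Module.End R V} (hs : IsUnit (dlt D s)) :
    mulStar D (starInv D s) s = 0 := by
  rw [mulStar_eq_mul_dlt_add, starInv, neg_mul, mul_assoc, Ring.inverse_mul_cancel _ hs,
    mul_one, neg_add_cancel]

lemma dlt_starInv {D s : Module.End R V} (hD : D * D = 0) (hs : IsUnit (dlt D s)) :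
    dlt D (starInv D s) = Ring.inverse (dlt D s) := by
  rw [← one_mul (Ring.inverse _), Ring.eq_mul_inverse_iff_mul_eq _ _ _ hs, ← dlt_mulStar hD,
    starInv_mulStar_self hs, dlt_zero]

lemma isUnit_dlt_starInv {D s : Module.End R V} (hD : D * D = 0) (hs : IsUnit (dlt D s)) :
    IsUnit (dlt D (starInv D s)) :=
  dlt_starInv hD hs ▸ hs.ringInverse

@[reducible]
noncomputable def dltUnitGroup {D : Module.End R V} (hD : D * D = 0) :
    Group {s : Module.End R V // IsUnit (dlt D s)} where
  mul a b := ⟨mulStar D a b, dlt_mulStar hD a b ▸ a.2.mul b.2⟩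
  one := ⟨0, dlt_zero D ▸ isUnit_one⟩
  inv a := ⟨starInv D a, isUnit_dlt_starInv hD a.2⟩
  mul_assoc a b c := Subtype.ext (mulStar_assoc hD a b c)
  one_mul a := Subtype.ext (zero_mulStar D a)
  mul_one a := Subtype.ext (mulStar_zero D a)
  inv_mul_cancel a := Subtype.ext (starInv_mulStar_self a.2)

/-- the set G = { s | δ(s) invertible } carries a group structure with
multiplication ∗, identity 0 and inverse s ↦ −s ∘ δ(s)⁻¹; moreover δ is a group
homomorphism from G to the group of invertible endomorphisms. -/
theorem group_structure (D : Module.End R V) (hD : D * D = 0) :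
    ∃ g : Group {s : Module.End R V // IsUnit (dlt D s)},
      (∀ a b : {s : Module.End R V // IsUnit (dlt D s)},
        ((g.mul a b : {s : Module.End R V // IsUnit (dlt D s)}) : Module.End R V)
          = mulStar D (a : Module.End R V) (b : Module.End R V)) ∧
      ((g.one : Module.End R V) = 0) ∧
      (∀ a : {s : Module.End R V // IsUnit (dlt D s)},
        ((g.inv a : {s : Module.End R V // IsUnit (dlt D s)}) : Module.End R V)
          = -((a : Module.End R V) * Ring.inverse (dlt D (a : Module.End R V)))) ∧
      ∃ φ : {s : Module.End R V // IsUnit (dlt D s)} → (Module.End R V)ˣ,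
        (∀ a, ((φ a : (Module.End R V)ˣ) : Module.End R V) = dlt D (a : Module.End R V)) ∧
        (∀ a b, φ (g.mul a b) = φ a * φ b) := by
  refine ⟨dltUnitGroup hD, fun _ _ => rfl, rfl, fun _ => rfl, fun a => a.2.unit,
    fun _ => rfl, fun a b => Units.ext (dlt_mulStar hD a b)⟩
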